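/- arXiv:2212.09954 — 2 statements merged into one kernel-verified Lean document; each statement's English description precedes it below -/
import Mathlib

section
/- Let j ∈ {1,…,d}, let C be a compact set in ℝ^d with y^j = 1 for all y ∈ C, let h(x) = x^j + g₁(x^{−j}) − g₂(x^{−j}) where g₁, g₂ are convex functions on ℝ^{d−1} with linear growth, and let H := {x ∈ ℝ^d : h(x) = 0}. Then h ∈ H^j_C (i.e., ∇h(x) ∈ C whenever x^{−j} ∈ dom∇g₁ ∩ dom∇g₂) if and only if for every x ∈ H there exists a normal vector w ∈ C to H at x. -/
open Filter Topology Set Pointwise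
open scoped RealInnerProductSpace

noncomputable section

abbrev Euc (d : ℕ) := EuclideanSpace ℝ (Fin d)

/-- A proper lower-semicontinuous (closed) convex function with values in `ℝ ∪ {+∞}`. -/
def ClosedConvexFun {d : ℕ} (f : Euc d → EReal) : Prop :=
  LowerSemicontinuous f ∧ (∀ x, f x ≠ ⊥) ∧ (∃ x, f x ≠ ⊤) ∧
    ∀ x y : Euc d, ∀ a b : ℝ, 0 ≤ a → 0 ≤ b → a + b = 1 →
      f (a • x + b • y) ≤ (a : EReal) * f x + (b : EReal) * f y

/-- Subdifferential of an `EReal`-valued function. -/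
def subdiff {d : ℕ} (f : Euc d → EReal) (x : Euc d) : Set (Euc d) :=
  {y | ∀ z : Euc d, ((⟪z, y⟫ : ℝ) : EReal) + f x ≤ f (x + z)}

/-- Convex conjugate. -/
def fconj {d : ℕ} (f : Euc d → EReal) (y : Euc d) : EReal :=
  ⨆ x : Euc d, ((⟪x, y⟫ : ℝ) : EReal) - f x

/-- The function `f_A(x) = sup_{y ∈ A} (⟨x,y⟩ - f*(y))`. -/
def restrSup {d : ℕ} (f : Euc d → EReal) (A : Set (Euc d)) (x : Euc d) : EReal :=
  ⨆ y ∈ A, (((⟪x, y⟫ : ℝ) : EReal) - fconj f y)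

/-- `Arg_A(x) = argmax_{y ∈ A} (⟨x,y⟩ - f*(y))`. -/
def argMaxOn {d : ℕ} (f : Euc d → EReal) (A : Set (Euc d)) (x : Euc d) : Set (Euc d) :=
  {y ∈ A | ∀ z ∈ A, ((⟪x, z⟫ : ℝ) : EReal) - fconj f z ≤ ((⟪x, y⟫ : ℝ) : EReal) - fconj f y}

/-- Linear growth: `|g x| ≤ K (1 + |x|)`. -/
def LinGrowth {k : ℕ} (g : Euc k → ℝ) : Prop :=
  ∃ K > 0, ∀ x, |g x| ≤ K * (1 + ‖x‖)

/-- `x^{-j}`: delete the `j`-th coordinate. -/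
def dropCoord {d : ℕ} (j : Fin (d + 1)) (x : Euc (d + 1)) : Euc d :=
  WithLp.toLp 2 (fun i => x (j.succAbove i))

/-- The class `H^j_C`. -/
def MemH {d : ℕ} (j : Fin (d + 1)) (C : Set (Euc (d + 1))) (h : Euc (d + 1) → ℝ) : Prop :=
  ∃ g₁ g₂ : Euc d → ℝ, ConvexOn ℝ Set.univ g₁ ∧ ConvexOn ℝ Set.univ g₂ ∧
    LinGrowth g₁ ∧ LinGrowth g₂ ∧
    (∀ x : Euc (d + 1), h x = x j + g₁ (dropCoord j x) - g₂ (dropCoord j x)) ∧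
    ∀ x : Euc (d + 1), DifferentiableAt ℝ g₁ (dropCoord j x) →
      DifferentiableAt ℝ g₂ (dropCoord j x) → gradient h x ∈ C

/-- `θ^j(C) = {y / y^j : y ∈ C}`. -/
def theta {d : ℕ} (j : Fin d) (C : Set (Euc d)) : Set (Euc d) :=
  (fun y => (y j)⁻¹ • y) '' C

/-- `w` is a regular normal to `H` at `x`: `limsup_{H ∋ y → x} ⟨w, y-x⟩/|y-x| ≤ 0`. -/
def RegNormal {d : ℕ} (H : Set (Euc d)) (x w : Euc d) : Prop :=
  ∀ ε > 0, ∃ δ > 0, ∀ y ∈ H, y ≠ x → ‖y - x‖ < δ → ⟪w, y - x⟫ ≤ ε * ‖y - x‖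

/-- `w` is a normal vector to `H` at `x`. -/
def NormalVec {d : ℕ} (H : Set (Euc d)) (x w : Euc d) : Prop :=
  ∃ xs ws : ℕ → Euc d, (∀ n, xs n ∈ H ∧ RegNormal H (xs n) (ws n)) ∧
    Tendsto xs atTop (𝓝 x) ∧ Tendsto ws atTop (𝓝 w)

/-- Effective domain `{x | f x < ∞}`. -/
def effDom {d : ℕ} (f : Euc d → EReal) : Set (Euc d) := {x | f x ≠ ⊤}

/-- Real part of an `EReal`-valued function. -/
def toRealFun {d : ℕ} (f : Euc d → EReal) : Euc d → ℝ := fun x => (f x).toReal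

/-- Points of `int (dom f)` where `f` is differentiable. -/
def domGrad {d : ℕ} (f : Euc d → EReal) : Set (Euc d) :=
  {x | x ∈ interior (effDom f) ∧ DifferentiableAt ℝ (toRealFun f) x}

/-- `range ∇f`. -/
def gradRange {d : ℕ} (f : Euc d → EReal) : Set (Euc d) :=
  (fun x => gradient (toRealFun f) x) '' domGrad f

/-- Clarke-type subdifferential `∂̄f(x)`. -/
def clarke {d : ℕ} (f : Euc d → EReal) (x : Euc d) : Set (Euc d) :=
  closure (convexHull ℝ
    {v | ∃ xs : ℕ → Euc d, (∀ n, xs n ∈ domGrad f) ∧ Tendsto xs atTop (𝓝 x) ∧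
      Tendsto (fun n => gradient (toRealFun f) (xs n)) atTop (𝓝 v)})

/-- Singular set `Σ^j_A(Ψ)`. -/
def SigmaJ {d : ℕ} (Ψ : Euc d → Set (Euc d)) (j : Fin d) (A : Set (Euc d)) : Set (Euc d) :=
  {x | ∃ y₁ ∈ Ψ x ∩ A, ∃ y₂ ∈ Ψ x ∩ A, y₁ j ≠ y₂ j}

/-- The bilinear form `S(x,y) = ∑ x^i S^{ij} y^j`. -/
def Sbil {d : ℕ} (S : Matrix (Fin d) (Fin d) ℝ) (x y : Euc d) : ℝ :=
  ∑ i, ∑ k, x i * S i k * y k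

/-- Matrix acting on a vector. -/
def matVec {d : ℕ} (M : Matrix (Fin d) (Fin d) ℝ) (y : Euc d) : Euc d :=
  WithLp.toLp 2 (fun i => ∑ k, M i k * y k)

/-- Fitzpatrick function `ψ_G(x) = sup_{y ∈ G}(S(x,y) - S(y,y)/2)`. -/
def fitz {d : ℕ} (S : Matrix (Fin d) (Fin d) ℝ) (G : Set (Euc d)) (x : Euc d) : EReal :=
  ⨆ y ∈ G, ((Sbil S x y - Sbil S y y / 2 : ℝ) : EReal)

/-- `S`-monotone set. -/
def SMonotone {d : ℕ} (S : Matrix (Fin d) (Fin d) ℝ) (G : Set (Euc d)) : Prop :=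
  ∀ x ∈ G, ∀ y ∈ G, 0 ≤ Sbil S (x - y) (x - y)

/-- Projection `P_G(x) = argmin_{y ∈ G} S(x-y, x-y)`. -/
def proj {d : ℕ} (S : Matrix (Fin d) (Fin d) ℝ) (G : Set (Euc d)) (x : Euc d) : Set (Euc d) :=
  {y ∈ G | ∀ z ∈ G, Sbil S (x - y) (x - y) ≤ Sbil S (x - z) (x - z)}

/-- `S`-regular normal vector. -/
def SRegNormal {d : ℕ} (S : Matrix (Fin d) (Fin d) ℝ) (H : Set (Euc d)) (x w : Euc d) : Prop :=
  ∀ ε > 0, ∃ δ > 0, ∀ y ∈ H, y ≠ x → ‖y - x‖ < δ → Sbil S w (y - x) ≤ ε * ‖y - x‖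

/-- `S`-normal vector. -/
def SNormal {d : ℕ} (S : Matrix (Fin d) (Fin d) ℝ) (H : Set (Euc d)) (x w : Euc d) : Prop :=
  ∃ xs ws : ℕ → Euc d, (∀ n, xs n ∈ H ∧ SRegNormal S H (xs n) (ws n)) ∧
    Tendsto xs atTop (𝓝 x) ∧ Tendsto ws atTop (𝓝 w)

/-- First-order singular set `Σ₁^j(P_G)`. -/
def Sigma1J {d : ℕ} (S : Matrix (Fin d) (Fin d) ℝ) (G : Set (Euc d)) (j : Fin d) :
    Set (Euc d) :=
  {x | ∃ y₁ ∈ proj S G x, ∃ y₂ ∈ proj S G x,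
    0 < Sbil S (y₁ - y₂) (y₁ - y₂) ∧ y₁ j ≠ y₂ j}

/-- Zero-order singular set `Σ̄₀^j(P_G)`. -/
def Sigma0J {d : ℕ} (S : Matrix (Fin d) (Fin d) ℝ) (G : Set (Euc d)) (j : Fin d) :
    Set (Euc d) :=
  {x | ∃ y₁ ∈ proj S G x, ∃ y₂ ∈ proj S G x,
    Sbil S (y₁ - y₂) (y₁ - y₂) = 0 ∧ y₁ j ≠ y₂ j}

/-- The canonical bilinear form of index `m` on `ℝ^m × ℝ^k`. -/
def Lam {m k : ℕ} (p q : Euc m × Euc k) : ℝ := ⟪p.1, q.1⟫ - ⟪p.2, q.2⟫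

/-!
`H` is the graph `x j = (g₂ - g₁) (x^{-j})`, and `g₁`, `g₂` are globally Lipschitz, being convex
with linear growth.

(⇒) Approximate `x^{-j}` by points where both `gᵢ` are differentiable (Rademacher). Above them
`∇h ∈ C` is a regular normal to the level set `H`, and compactness of `C` yields a limit.

(⇐) Let `g₁`, `g₂` be differentiable at `u`, and let `w ∈ C` be normal to `H` at the point over `u`,
the limit of regular normals `wₙ` at points `xₙ ∈ H`. The regular-normal inequality says that
`wₙ^{-j} / wₙ^j` is a Fréchet subgradient of `g₁ - g₂` at `xₙ^{-j}`; adding a subgradient of `g₂`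
gives a Fréchet subgradient of `g₁`, which is a genuine one by convexity. Subgradients at points
converging to `u` converge to the gradient, so `w = (1, ∇g₁ u - ∇g₂ u) = ∇h`, using `w j = 1`.
-/

open Metric

section Subgradient

variable {E : Type*} [NormedAddCommGroup E] [InnerProductSpace ℝ E] {g : E → ℝ} {s u : E}

def HasSubgradientAt (g : E → ℝ) (s u : E) : Prop :=
  ∀ v, g u + ⟪s, v - u⟫ ≤ g v

def HasFrechetSubgradientAt (g : E → ℝ) (s u : E) : Prop :=
  ∀ ε > 0, ∀ᶠ v in 𝓝 u, g u + ⟪s, v - u⟫ - ε * ‖v - u‖ ≤ g v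

lemma HasGradientAt.eventually_abs_sub_sub_inner_le [CompleteSpace E] {G : E}
    (hd : HasGradientAt g G u) {ε : ℝ} (hε : 0 < ε) :
    ∀ᶠ v in 𝓝 u, |g v - g u - ⟪G, v - u⟫| ≤ ε * ‖v - u‖ := by
  simpa using hd.hasFDerivAt.isLittleO.def hε

lemma HasGradientAt.hasFrechetSubgradientAt [CompleteSpace E] {G : E}
    (hd : HasGradientAt g G u) : HasFrechetSubgradientAt g G u := fun ε hε => by
  filter_upwards [hd.eventually_abs_sub_sub_inner_le hε] with v hv
  linarith [neg_abs_le (g v - g u - ⟪G, v - u⟫)]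

lemma ConvexOn.le_add_mul_sub (hg : ConvexOn ℝ univ g) (u v : E) {t : ℝ} (ht₀ : 0 ≤ t)
    (ht₁ : t ≤ 1) : g (u + t • (v - u)) ≤ g u + t * (g v - g u) := by
  have h := hg.2 (mem_univ u) (mem_univ v) (sub_nonneg.2 ht₁) ht₀ (sub_add_cancel 1 t)
  rw [smul_eq_mul, smul_eq_mul] at h
  have hseg : u + t • (v - u) = (1 - t) • u + t • v := by module
  rw [hseg]
  linarith

lemma ConvexOn.hasSubgradientAt_of_hasFrechetSubgradientAt (hg : ConvexOn ℝ univ g)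
    (hs : HasFrechetSubgradientAt g s u) : HasSubgradientAt g s u := by
  intro v
  refine le_of_forall_pos_le_add fun ε hε => ?_
  have hseg : Tendsto (fun t : ℝ => u + t • (v - u)) (𝓝[>] 0) (𝓝 u) := by
    have : Continuous (fun t : ℝ => u + t • (v - u)) := by fun_prop
    simpa using (this.tendsto 0).mono_left nhdsWithin_le_nhds
  obtain ⟨t, hnear, ht⟩ := ((hseg.eventually (hs (ε / (‖v - u‖ + 1)) (by positivity))).and
    (Ioc_mem_nhdsGT (zero_lt_one' ℝ))).exists
  have hconv := hg.le_add_mul_sub u v ht.1.le ht.2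
  rw [add_sub_cancel_left, inner_smul_right, norm_smul, Real.norm_of_nonneg ht.1.le] at hnear
  have hfrac : ε / (‖v - u‖ + 1) * ‖v - u‖ ≤ ε := by
    rw [div_mul_eq_mul_div, div_le_iff₀ (by positivity)]
    nlinarith [norm_nonneg (v - u)]
  have : t * (⟪s, v - u⟫ - ε) ≤ t * (g v - g u) := by nlinarith
  linarith [le_of_mul_le_mul_left this ht.1]

lemma HasSubgradientAt.eq_of_hasGradientAt [CompleteSpace E] {G : E}
    (hs : HasSubgradientAt g s u) (hd : HasGradientAt g G u) : s = G := by
  have hmin : IsLocalMin (fun v => g v - innerSL ℝ s v) u :=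
    Filter.Eventually.of_forall fun v => by
      have := hs v
      simp only [innerSL_apply_apply, inner_sub_right] at this ⊢
      linarith
  have hzero := hmin.hasFDerivAt_eq_zero (hd.hasFDerivAt.sub (innerSL ℝ s).hasFDerivAt)
  refine ext_inner_right ℝ fun w => ?_
  have := congrArg (fun f : StrongDual ℝ E => f w) hzero
  simp only [sub_apply, InnerProductSpace.toDual_apply_apply,
    innerSL_apply_apply, zero_apply] at this
  linarith

lemma HasFrechetSubgradientAt.add_hasSubgradientAt {f : E → ℝ} {t : E}
    (hf : HasFrechetSubgradientAt f s u) (hg : HasSubgradientAt g t u) :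
    HasFrechetSubgradientAt (fun v => f v + g v) (s + t) u :=
  fun ε hε => (hf ε hε).mono fun v hv => by
    rw [inner_add_left]
    linarith [hg v]

lemma HasSubgradientAt.norm_le {L : NNReal} (hL : LipschitzWith L g)
    (hs : HasSubgradientAt g s u) : ‖s‖ ≤ L := by
  have h₁ := hs (u + s)
  have h₂ := hL.dist_le_mul (u + s) u
  rw [add_sub_cancel_left, real_inner_self_eq_norm_sq] at h₁
  rw [Real.dist_eq, dist_eq_norm, add_sub_cancel_left] at h₂
  have : ‖s‖ ^ 2 ≤ L * ‖s‖ := by linarith [le_abs_self (g (u + s) - g u)]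
  nlinarith [norm_nonneg s]

lemma isClosed_setOf_hasSubgradientAt (hg : Continuous g) :
    IsClosed {p : E × E | HasSubgradientAt g p.2 p.1} := by
  simp only [HasSubgradientAt, ofPred_forall]
  exact isClosed_iInter fun v => isClosed_le (by fun_prop) continuous_const

lemma HasSubgradientAt.of_tendsto {ι : Type*} {l : Filter ι} [l.NeBot] {u' s' : ι → E}
    (hg : Continuous g) (hu : Tendsto u' l (𝓝 u)) (hs : Tendsto s' l (𝓝 s))
    (h : ∀ᶠ i in l, HasSubgradientAt g (s' i) (u' i)) : HasSubgradientAt g s u :=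
  (isClosed_setOf_hasSubgradientAt hg).mem_of_tendsto (hu.prodMk_nhds hs) h

section FiniteDimensional

variable [FiniteDimensional ℝ E] {L : NNReal}

lemma LipschitzWith.dense_setOf_differentiableAt_and [MeasurableSpace E] [BorelSpace E]
    {g₁ g₂ : E → ℝ} {L₁ L₂ : NNReal} (h₁ : LipschitzWith L₁ g₁) (h₂ : LipschitzWith L₂ g₂) :
    Dense {u | DifferentiableAt ℝ g₁ u ∧ DifferentiableAt ℝ g₂ u} :=
  (MeasureTheory.Measure.addHaar : MeasureTheory.Measure E).dense_of_ae
    ((h₁.ae_differentiableAt (μ := MeasureTheory.Measure.addHaar)).and h₂.ae_differentiableAt)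

/-- Subgradients are limits of gradients taken at nearby points of differentiability. -/
lemma ConvexOn.exists_hasSubgradientAt [MeasurableSpace E] [BorelSpace E]
    (hg : ConvexOn ℝ univ g) (hL : LipschitzWith L g) (u : E) : ∃ s, HasSubgradientAt g s u := by
  have hdense : Dense {u | DifferentiableAt ℝ g u} :=
    (hL.dense_setOf_differentiableAt_and hL).mono fun _ h => h.1
  obtain ⟨u', hu'D, hu'⟩ := mem_closure_iff_seq_limit.1 (hdense u)
  have hgrad (n : ℕ) : HasSubgradientAt g (gradient g (u' n)) (u' n) :=
    hg.hasSubgradientAt_of_hasFrechetSubgradientAt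
      (DifferentiableAt.hasGradientAt (hu'D n)).hasFrechetSubgradientAt
  obtain ⟨s, -, φ, hφ, hs⟩ := (isCompact_closedBall (0 : E) L).tendsto_subseq
    fun n => mem_closedBall_zero_iff.2 ((hgrad n).norm_le hL)
  exact ⟨s, .of_tendsto hL.continuous (hu'.comp hφ.tendsto_atTop) hs
    (Eventually.of_forall fun n => hgrad (φ n))⟩

lemma HasGradientAt.tendsto_of_hasSubgradientAt {G : E} (hd : HasGradientAt g G u)
    (hL : LipschitzWith L g) {u' s' : ℕ → E} (hu : Tendsto u' atTop (𝓝 u))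
    (hs : ∀ᶠ n in atTop, HasSubgradientAt g (s' n) (u' n)) : Tendsto s' atTop (𝓝 G) := by
  refine (isCompact_closedBall (0 : E) L).tendsto_nhds_of_unique_mapClusterPt
    (hs.mono fun n hn => mem_closedBall_zero_iff.2 (hn.norm_le hL)) fun t _ ht => ?_
  obtain ⟨φ, hφ, hst⟩ := ht.tendsto_subseq
  exact (HasSubgradientAt.of_tendsto hL.continuous (hu.comp hφ.tendsto_atTop) hst
    (hφ.tendsto_atTop.eventually hs)).eq_of_hasGradientAt hd

end FiniteDimensional

end Subgradient

lemma ConvexOn.exists_lipschitzWith_of_linGrowth {k : ℕ} {g : Euc k → ℝ}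
    (hg : ConvexOn ℝ univ g) (hl : LinGrowth g) : ∃ L, LipschitzWith L g := by
  obtain ⟨K, hK, hgK⟩ := hl
  refine ⟨(4 * K).toNNReal, LipschitzWith.of_dist_le_mul fun x y => ?_⟩
  rw [Real.coe_toNNReal _ (by positivity)]
  -- Mathlib's local Lipschitz bound on balls of radius `r` around `y`, then `r → ∞`.
  have hbound (r : ℝ) (hr : dist x y < r) :
      dist (g x) (g y) ≤ 2 * (K * (1 + ‖y‖ + 2 * r)) / r * dist x y := by
    have hr₀ : 0 < r := dist_nonneg.trans_lt hr
    have hM (a : Euc k) (ha : dist a y < 2 * r) : |g a| ≤ K * (1 + ‖y‖ + 2 * r) := by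
      rw [dist_eq_norm] at ha
      have : ‖a‖ ≤ ‖y‖ + 2 * r := by linarith [norm_sub_norm_le a y]
      exact (hgK a).trans (mul_le_mul_of_nonneg_left (by linarith) hK.le)
    have hlip := (hg.subset (subset_univ _) (convex_ball y (2 * r))).lipschitzOnWith_of_abs_le
      hr₀ hM
    have := hlip.dist_le_mul x (mem_ball.2 (by linarith)) y (mem_ball_self (by linarith))
    rwa [Real.coe_toNNReal _ (by positivity)] at this
  have hlim : Tendsto (fun r => 2 * (K * (1 + ‖y‖ + 2 * r)) / r * dist x y) atTop
      (𝓝 (4 * K * dist x y)) := by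
    have := ((tendsto_inv_atTop_zero.const_mul (2 * K * (1 + ‖y‖))).add_const (4 * K)).mul_const
      (dist x y)
    rw [mul_zero, zero_add] at this
    refine this.congr' ?_
    filter_upwards [eventually_gt_atTop 0] with r hr
    field_simp
    ring
  exact ge_of_tendsto hlim ((eventually_gt_atTop (dist x y)).mono hbound)

section Coordinates

variable {d : ℕ} (j : Fin (d + 1))

def insertCoord (a : ℝ) (u : Euc d) : Euc (d + 1) :=
  WithLp.toLp 2 (Fin.insertNth (α := fun _ => ℝ) j a u.ofLp)

@[simp] lemma dropCoord_insertCoord (a : ℝ) (u : Euc d) : dropCoord j (insertCoord j a u) = u := by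
  ext i
  simp [dropCoord, insertCoord]

@[simp] lemma insertCoord_apply_self (a : ℝ) (u : Euc d) : insertCoord j a u j = a := by
  simp [insertCoord]

@[simp] lemma insertCoord_apply_dropCoord (x : Euc (d + 1)) :
    insertCoord j (x j) (dropCoord j x) = x :=
  congrArg (WithLp.toLp 2) (Fin.insertNth_self_removeNth j x.ofLp)

lemma insertCoord_sub (a b : ℝ) (u v : Euc d) :
    insertCoord j a u - insertCoord j b v = insertCoord j (a - b) (u - v) := by
  rw [← insertCoord_apply_dropCoord j (insertCoord j a u - insertCoord j b v)]
  congr 1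
  · exact congrArg₂ (· - ·) (insertCoord_apply_self j a u) (insertCoord_apply_self j b v)
  · exact congrArg₂ (· - ·) (dropCoord_insertCoord j a u) (dropCoord_insertCoord j b v)

lemma continuous_insertCoord : Continuous fun p : ℝ × Euc d => insertCoord j p.1 p.2 := by
  have : Continuous fun p : ℝ × Euc d => Fin.insertNth (α := fun _ => ℝ) j p.1 p.2.ofLp :=
    Continuous.finInsertNth j continuous_fst ((PiLp.continuous_ofLp 2 _).comp continuous_snd)
  exact (PiLp.continuous_toLp 2 _).comp this

def dropCoordL : Euc (d + 1) →L[ℝ] Euc d :=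
  LinearMap.toContinuousLinearMap
    { toFun := dropCoord j
      map_add' := fun _ _ => rfl
      map_smul' := fun _ _ => rfl }

@[simp] lemma dropCoordL_apply (x : Euc (d + 1)) : dropCoordL j x = dropCoord j x := rfl

lemma inner_eq_mul_add_inner_dropCoord (x y : Euc (d + 1)) :
    ⟪x, y⟫ = x j * y j + ⟪dropCoord j x, dropCoord j y⟫ := by
  simp only [PiLp.inner_apply, RCLike.inner_apply, conj_trivial]
  rw [Fin.sum_univ_succAbove _ j, mul_comm (y j)]
  rfl

lemma norm_le_abs_add_norm_dropCoord (x : Euc (d + 1)) : ‖x‖ ≤ |x j| + ‖dropCoord j x‖ := by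
  have h := inner_eq_mul_add_inner_dropCoord j x x
  rw [real_inner_self_eq_norm_sq, real_inner_self_eq_norm_sq, ← sq, ← sq_abs (x j)] at h
  nlinarith [norm_nonneg x, norm_nonneg (dropCoord j x), abs_nonneg (x j)]

lemma hasGradientAt_coord_add_sub_comp_dropCoord {f₁ f₂ : Euc d → ℝ} {F₁ F₂ : Euc d}
    {x : Euc (d + 1)} (hf₁ : HasGradientAt f₁ F₁ (dropCoord j x))
    (hf₂ : HasGradientAt f₂ F₂ (dropCoord j x)) :
    HasGradientAt (fun y => y j + f₁ (dropCoord j y) - f₂ (dropCoord j y))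
      (insertCoord j 1 (F₁ - F₂)) x := by
  have hproj : HasFDerivAt (fun y : Euc (d + 1) => y j)
      (EuclideanSpace.proj j : Euc (d + 1) →L[ℝ] ℝ) x :=
    (EuclideanSpace.proj j : Euc (d + 1) →L[ℝ] ℝ).hasFDerivAt
  rw [hasGradientAt_iff_hasFDerivAt]
  refine ((hproj.add (hf₁.hasFDerivAt.comp x (dropCoordL j).hasFDerivAt)).sub
    (hf₂.hasFDerivAt.comp x (dropCoordL j).hasFDerivAt)).congr_fderiv ?_
  ext v
  simp [inner_eq_mul_add_inner_dropCoord j, inner_sub_left]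
  ring

end Coordinates

lemma RegNormal.of_hasGradientAt {m : ℕ} {h : Euc m → ℝ} {H : Set (Euc m)} {x w : Euc m}
    (hH : ∀ y ∈ H, h y = h x) (hd : HasGradientAt h w x) : RegNormal H x w := by
  intro ε hε
  obtain ⟨δ, hδ, hball⟩ := Metric.eventually_nhds_iff.1 (hd.eventually_abs_sub_sub_inner_le hε)
  refine ⟨δ, hδ, fun y hy _ hyx => ?_⟩
  have := @hball y (by rwa [dist_eq_norm])
  rw [hH y hy, sub_self, zero_sub, abs_neg] at this
  exact (le_abs_self _).trans this

section Graph

variable {d : ℕ} {j : Fin (d + 1)} {φ : Euc d → ℝ} {H : Set (Euc (d + 1))}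

lemma insertCoord_mem_of_graph (hH : ∀ x, x ∈ H ↔ x j = φ (dropCoord j x)) (u : Euc d) :
    insertCoord j (φ u) u ∈ H := by
  simp [hH]

lemma insertCoord_eq_of_mem_graph (hH : ∀ x, x ∈ H ↔ x j = φ (dropCoord j x)) {x : Euc (d + 1)}
    (hx : x ∈ H) : insertCoord j (φ (dropCoord j x)) (dropCoord j x) = x := by
  rw [← (hH x).1 hx, insertCoord_apply_dropCoord]

lemma RegNormal.hasFrechetSubgradientAt_neg_of_graph
    (hH : ∀ x, x ∈ H ↔ x j = φ (dropCoord j x)) {L : NNReal} (hφ : LipschitzWith L φ)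
    {u : Euc d} {w : Euc (d + 1)} (hw : RegNormal H (insertCoord j (φ u) u) w) (hwj : 0 < w j) :
    HasFrechetSubgradientAt (fun v => -φ v) ((w j)⁻¹ • dropCoord j w) u := by
  intro ε hε
  obtain ⟨δ, hδ, hreg⟩ := hw (ε * w j / (1 + L)) (by positivity)
  have hnorm (v : Euc d) : ‖insertCoord j (φ v) v - insertCoord j (φ u) u‖ ≤ (1 + L) * ‖v - u‖ := by
    rw [insertCoord_sub]
    refine (norm_le_abs_add_norm_dropCoord j _).trans ?_
    have := hφ.dist_le_mul v u
    rw [Real.dist_eq, dist_eq_norm] at this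
    simp only [insertCoord_apply_self, dropCoord_insertCoord]
    linarith
  filter_upwards [ball_mem_nhds u (show 0 < δ / (1 + L) by positivity)] with v hv
  rcases eq_or_ne v u with rfl | hvu
  · simp
  rw [mem_ball, dist_eq_norm, lt_div_iff₀ (by positivity), mul_comm] at hv
  have hne : insertCoord j (φ v) v ≠ insertCoord j (φ u) u := fun h =>
    hvu (by simpa using congrArg (dropCoord j) h)
  have hslope := hreg _ (insertCoord_mem_of_graph hH v) hne ((hnorm v).trans_lt hv)
  rw [inner_eq_mul_add_inner_dropCoord j, insertCoord_sub] at hslope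
  simp only [insertCoord_apply_self, dropCoord_insertCoord] at hslope
  have hbound : ε * w j / (1 + L) * ‖insertCoord j (φ v) v - insertCoord j (φ u) u‖
      ≤ ε * w j * ‖v - u‖ := by
    calc _ ≤ ε * w j / (1 + L) * ((1 + L) * ‖v - u‖) := by gcongr; exact hnorm v
      _ = ε * w j * ‖v - u‖ := by field_simp
  rw [insertCoord_sub] at hbound
  rw [inner_smul_left, RCLike.conj_to_real]
  have : w j * (φ v - φ u + (w j)⁻¹ * ⟪dropCoord j w, v - u⟫) ≤ w j * (ε * ‖v - u‖) := by
    rw [mul_add, mul_inv_cancel_left₀ hwj.ne']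
    linarith
  linarith [le_of_mul_le_mul_left this hwj]

lemma exists_normalVec_mem_of_dense (hφ : Continuous φ)
    (hH : ∀ x, x ∈ H ↔ x j = φ (dropCoord j x)) {h : Euc (d + 1) → ℝ} (hh : ∀ y ∈ H, h y = 0)
    {C : Set (Euc (d + 1))} (hC : IsCompact C) {D : Set (Euc d)} (hD : Dense D)
    (hgrad : ∀ u ∈ D, ∃ w ∈ C, HasGradientAt h w (insertCoord j (φ u) u))
    {x : Euc (d + 1)} (hx : x ∈ H) : ∃ w ∈ C, NormalVec H x w := by
  obtain ⟨u, huD, hu⟩ := mem_closure_iff_seq_limit.1 (hD (dropCoord j x))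
  choose w hwC hw using fun n => hgrad (u n) (huD n)
  obtain ⟨w₀, hw₀C, ψ, hψ, hwψ⟩ := hC.tendsto_subseq hwC
  have hxs : Tendsto (fun n => insertCoord j (φ (u n)) (u n)) atTop (𝓝 x) := by
    rw [← insertCoord_eq_of_mem_graph hH hx]
    exact ((continuous_insertCoord j).tendsto _).comp (((hφ.tendsto _).comp hu).prodMk_nhds hu)
  have hreg (n : ℕ) : RegNormal H (insertCoord j (φ (u n)) (u n)) (w n) :=
    .of_hasGradientAt (fun y hy => by rw [hh y hy, hh _ (insertCoord_mem_of_graph hH _)]) (hw n)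
  exact ⟨w₀, hw₀C, _, _, fun n => ⟨insertCoord_mem_of_graph hH _, hreg (ψ n)⟩,
    hxs.comp hψ.tendsto_atTop, hwψ⟩

lemma NormalVec.eq_insertCoord_of_hasGradientAt {g₁ g₂ : Euc d → ℝ}
    (hH : ∀ x, x ∈ H ↔ x j = g₂ (dropCoord j x) - g₁ (dropCoord j x))
    (hg₁ : ConvexOn ℝ univ g₁) (hg₂ : ConvexOn ℝ univ g₂) {L₁ L₂ : NNReal}
    (hL₁ : LipschitzWith L₁ g₁) (hL₂ : LipschitzWith L₂ g₂) {u G₁ G₂ : Euc d}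
    (hd₁ : HasGradientAt g₁ G₁ u) (hd₂ : HasGradientAt g₂ G₂ u) {w : Euc (d + 1)}
    (hw : NormalVec H (insertCoord j (g₂ u - g₁ u) u) w) (hwj : w j = 1) :
    w = insertCoord j 1 (G₁ - G₂) := by
  obtain ⟨xs, ws, hmem, hxs, hws⟩ := hw
  have hu : Tendsto (fun n => dropCoord j (xs n)) atTop (𝓝 u) := by
    simpa [Function.comp_def] using ((dropCoordL j).continuous.tendsto _).comp hxs
  have ht : Tendsto (fun n => ws n j) atTop (𝓝 1) :=
    hwj ▸ ((PiLp.continuous_apply 2 _ j).tendsto w).comp hws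
  have hpos : ∀ᶠ n in atTop, 0 < ws n j := ht.eventually (lt_mem_nhds one_pos)
  choose s hs using fun n => hg₂.exists_hasSubgradientAt hL₂ (dropCoord j (xs n))
  have hsG₂ := hd₂.tendsto_of_hasSubgradientAt hL₂ hu (Eventually.of_forall hs)
  have hsub (n : ℕ) (hn : 0 < ws n j) :
      HasSubgradientAt g₁ ((ws n j)⁻¹ • dropCoord j (ws n) + s n) (dropCoord j (xs n)) := by
    have hreg := insertCoord_eq_of_mem_graph (φ := fun v => g₂ v - g₁ v) hH (hmem n).1 ▸
      (hmem n).2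
    have := ((hreg.hasFrechetSubgradientAt_neg_of_graph hH (hL₂.sub hL₁) hn).add_hasSubgradientAt
      (hs n))
    simp only [neg_sub, sub_add_cancel] at this
    exact hg₁.hasSubgradientAt_of_hasFrechetSubgradientAt this
  have hsG₁ := hd₁.tendsto_of_hasSubgradientAt hL₁ hu (hpos.mono hsub)
  have hq : Tendsto (fun n => dropCoord j (ws n)) atTop (𝓝 (G₁ - G₂)) := by
    have := ht.smul (hsG₁.sub hsG₂)
    rw [one_smul] at this
    refine this.congr' (hpos.mono fun n hn => ?_)
    rw [add_sub_cancel_right, smul_smul, mul_inv_cancel₀ hn.ne', one_smul]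
  have := ((continuous_insertCoord j).tendsto _).comp (ht.prodMk_nhds hq)
  simp only [Function.comp_def, insertCoord_apply_dropCoord] at this
  exact tendsto_nhds_unique hws this

end Graph

/-- Lemma 1 of the paper. -/
theorem stmt1 {d : ℕ} (j : Fin (d + 1)) (C : Set (Euc (d + 1)))
    (hC : IsCompact C) (hC1 : ∀ y ∈ C, y j = 1)
    (g₁ g₂ : Euc d → ℝ)
    (hg₁ : ConvexOn ℝ Set.univ g₁) (hg₂ : ConvexOn ℝ Set.univ g₂)
    (hl₁ : LinGrowth g₁) (hl₂ : LinGrowth g₂)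
    (h : Euc (d + 1) → ℝ)
    (hh : ∀ x, h x = x j + g₁ (dropCoord j x) - g₂ (dropCoord j x))
    (H : Set (Euc (d + 1))) (hH : H = {x | h x = 0}) :
    (∀ x : Euc (d + 1), DifferentiableAt ℝ g₁ (dropCoord j x) →
        DifferentiableAt ℝ g₂ (dropCoord j x) → gradient h x ∈ C) ↔
      ∀ x ∈ H, ∃ w ∈ C, NormalVec H x w := by
  obtain ⟨L₁, hL₁⟩ := hg₁.exists_lipschitzWith_of_linGrowth hl₁
  obtain ⟨L₂, hL₂⟩ := hg₂.exists_lipschitzWith_of_linGrowth hl₂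
  have hgraph (x : Euc (d + 1)) : x ∈ H ↔ x j = g₂ (dropCoord j x) - g₁ (dropCoord j x) := by
    rw [hH, mem_ofPred_eq, hh]
    constructor <;> intro <;> linarith
  have hgrad (x : Euc (d + 1)) (hd₁ : DifferentiableAt ℝ g₁ (dropCoord j x))
      (hd₂ : DifferentiableAt ℝ g₂ (dropCoord j x)) :
      HasGradientAt h (insertCoord j 1 (gradient g₁ (dropCoord j x) -
        gradient g₂ (dropCoord j x))) x := by
    rw [funext hh]
    exact hasGradientAt_coord_add_sub_comp_dropCoord j hd₁.hasGradientAt hd₂.hasGradientAt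
  constructor
  · intro hgradC x hx
    refine exists_normalVec_mem_of_dense (φ := fun v => g₂ v - g₁ v) (h := h)
      (hL₂.sub hL₁).continuous hgraph (fun y hy => by rwa [hH] at hy) hC
      (hL₁.dense_setOf_differentiableAt_and hL₂) (fun u ⟨hu₁, hu₂⟩ => ?_) hx
    rw [← dropCoord_insertCoord j (g₂ u - g₁ u) u] at hu₁ hu₂
    exact ⟨_, hgradC _ hu₁ hu₂, (hgrad _ hu₁ hu₂).differentiableAt.hasGradientAt⟩
  · intro hnormal x hd₁ hd₂
    rw [(hgrad x hd₁ hd₂).gradient]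
    obtain ⟨w, hwC, hw⟩ := hnormal _ (insertCoord_mem_of_graph (φ := fun v => g₂ v - g₁ v) hgraph _)
    rwa [← hw.eq_insertCoord_of_hasGradientAt hgraph hg₁ hg₂ hL₁ hL₂ hd₁.hasGradientAt
      hd₂.hasGradientAt (hC1 w hwC)]
end
end

section
/- Let f : ℝ^d → ℝ ∪ {+∞} be a closed convex function and C a compact set in ℝ^d such that C ∩ dom f* ≠ ∅. Then for every x ∈ ℝ^d, ∂f_C(x) = conv(∂f_C(x) ∩ C), the convex hull of ∂f_C(x) ∩ C. In particular, f_C is differentiable at x if and only if ∂f_C(x) ∩ C is a singleton, in which case ∂f_C(x) = {∇f_C(x)} ⊂ C. -/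
/-!
`f_C` is the upper envelope of the affine functions `x ↦ ⟪x, y⟫ - f*(y)`, `y ∈ C`. As `f*` is
lower semicontinuous and `C` compact, the envelope is finite and attained on a compact set of
maximisers `Arg_C(x)`, and the maximisers depend outer-semicontinuously on `x`. Every maximiser is
a subgradient. Conversely, comparing a subgradient `w` with maximisers at `x + t z`, `t → 0⁺`,
gives a maximiser `y` at `x` with `⟪z, w⟫ ≤ ⟪z, y⟫`; by Hahn–Banach
`∂f_C(x) ⊆ conv Arg_C(x) ⊆ conv (∂f_C(x) ∩ C)`. A gradient is the only possible subgradient, and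
if `Arg_C(x) = {w}`, maximisers at nearby points converge to `w`, which forces `∇f_C(x) = w`.
-/

open Filter Topology Set Pointwise
open scoped RealInnerProductSpace

noncomputable section

theorem IsCompact.convexHull {E : Type*} [NormedAddCommGroup E] [NormedSpace ℝ E]
    [FiniteDimensional ℝ E] {s : Set E} (hs : IsCompact s) : IsCompact (convexHull ℝ s) := by
  rcases s.eq_empty_or_nonempty with rfl | ⟨p, hp⟩
  · simp
  set n := Module.finrank ℝ E + 1
  let T : (Fin n → ℝ) × (Fin n → E) → E := fun q => ∑ i, q.1 i • q.2 i
  have hT : Continuous T := by fun_prop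
  suffices _root_.convexHull ℝ s = T '' (stdSimplex ℝ (Fin n) ×ˢ univ.pi fun _ => s) from
    this ▸ ((isCompact_stdSimplex (𝕜 := ℝ) (ι := Fin n)).prod
      (isCompact_univ_pi fun _ => hs)).image hT
  refine Subset.antisymm (fun x hx => ?_) ?_
  · -- Carathéodory: `x` is a convex combination of at most `n` points of `s`; pad to `n` points.
    obtain ⟨ι, _, z, w, hzs, hz, hw0, hw1, rfl⟩ := eq_pos_convex_span_of_mem_convexHull hx
    have hcard : Fintype.card ι ≤ Fintype.card (Fin n) := by
      simpa [n] using hz.card_le_finrank_succ.trans (by gcongr; exact Submodule.finrank_le _)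
    obtain ⟨e⟩ := Function.Embedding.nonempty_of_card_le hcard
    have hext : ∀ i ∉ range e, Function.extend e w 0 i = 0 := fun i hi =>
      Function.extend_apply' _ _ _ hi
    refine ⟨(Function.extend e w 0, Function.extend e z fun _ => p),
      ⟨⟨fun i => ?_, ?_⟩, ?_⟩, ?_⟩
    · by_cases hi : i ∈ range e
      · obtain ⟨j, rfl⟩ := hi
        simpa [e.injective.extend_apply] using (hw0 j).le
      · simp [hext i hi]
    · rw [← hw1]
      exact (Fintype.sum_of_injective e e.injective _ _ hext
        fun j => (e.injective.extend_apply _ _ j).symm).symm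
    · intro i _
      by_cases hi : i ∈ range e
      · obtain ⟨j, rfl⟩ := hi
        simpa [e.injective.extend_apply] using hzs (mem_range_self j)
      · simpa [Function.extend_apply' _ _ _ hi] using hp
    · refine (Fintype.sum_of_injective e e.injective _ _ (fun i hi => ?_) fun j => ?_).symm
      · simp [hext i hi]
      · simp [e.injective.extend_apply]
  · rintro _ ⟨q, ⟨hq, hqs⟩, rfl⟩
    exact (convex_convexHull ℝ s).sum_mem (fun i _ => hq.1 i) hq.2
      fun i _ => subset_convexHull ℝ s (hqs i (mem_univ i))

theorem LowerSemicontinuousAt.le_of_tendsto {α γ ι : Type*} [TopologicalSpace α]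
    [LinearOrder γ] [DenselyOrdered γ] [TopologicalSpace γ] [OrderTopology γ]
    {g : α → γ} {a : α} {L : γ} {l : Filter ι} [l.NeBot] {u : ι → α}
    (hg : LowerSemicontinuousAt g a) (hu : Tendsto u l (𝓝 a))
    (hgu : Tendsto (fun i => g (u i)) l (𝓝 L)) : g a ≤ L :=
  le_of_forall_lt_imp_le_of_dense fun _ hc =>
    ge_of_tendsto hgu ((hu.eventually (hg _ hc)).mono fun _ h => h.le)

section Subdifferential

variable {d : ℕ}

theorem mem_subdiff_coe_iff {φ : Euc d → ℝ} {x w : Euc d} :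
    w ∈ subdiff (fun x => (φ x : EReal)) x ↔ ∀ z, ⟪z, w⟫ + φ x ≤ φ (x + z) := by
  simp only [subdiff, mem_ofPred_eq, ← EReal.coe_add, EReal.coe_le_coe_iff]

theorem convex_subdiff_coe (φ : Euc d → ℝ) (x : Euc d) :
    Convex ℝ (subdiff (fun x => (φ x : EReal)) x) := by
  intro w₁ hw₁ w₂ hw₂ a b ha hb hab
  rw [mem_subdiff_coe_iff] at hw₁ hw₂ ⊢
  intro z
  have h₁ := mul_le_mul_of_nonneg_left (hw₁ z) ha
  have h₂ := mul_le_mul_of_nonneg_left (hw₂ z) hb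
  rw [inner_add_right, real_inner_smul_right, real_inner_smul_right]
  linear_combination h₁ + h₂ + (φ (x + z) - φ x) * hab

theorem eq_gradient_of_mem_subdiff_coe {φ : Euc d → ℝ} {x w : Euc d}
    (hφ : DifferentiableAt ℝ φ x) (hw : w ∈ subdiff (fun x => (φ x : EReal)) x) :
    w = gradient φ x := by
  let ℓ := InnerProductSpace.toDual ℝ (Euc d) w
  -- `φ - ⟪w, ·⟫` is minimal at `x`, so its derivative vanishes there.
  have hmin : IsLocalMin (fun u => φ u - ℓ u) x := Eventually.of_forall fun u => by
    have := mem_subdiff_coe_iff.1 hw (u - x)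
    simp only [ℓ, InnerProductSpace.toDual_apply_apply, add_sub_cancel, inner_sub_right,
      real_inner_comm w] at this ⊢
    linarith
  have hderiv := hmin.hasFDerivAt_eq_zero (hφ.hasFDerivAt.sub ℓ.hasFDerivAt)
  rw [gradient, sub_eq_zero.1 hderiv, LinearIsometryEquiv.symm_apply_apply]

end Subdifferential

section Conjugate

variable {d : ℕ} {f : Euc d → EReal}

theorem inner_sub_le_fconj (x y : Euc d) : ((⟪x, y⟫ : ℝ) : EReal) - f x ≤ fconj f y :=
  le_iSup (fun x => ((⟪x, y⟫ : ℝ) : EReal) - f x) x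

theorem ClosedConvexFun.fconj_ne_bot (hf : ClosedConvexFun f) (y : Euc d) : fconj f y ≠ ⊥ := by
  obtain ⟨x₀, hx₀⟩ := hf.2.2.1
  have h := inner_sub_le_fconj (f := f) x₀ y
  rw [← EReal.coe_toReal hx₀ (hf.2.1 x₀), ← EReal.coe_sub] at h
  exact ne_bot_of_le_ne_bot (EReal.coe_ne_bot _) h

theorem continuous_coe_inner_sub (x : Euc d) (c : EReal) :
    Continuous fun y : Euc d => ((⟪x, y⟫ : ℝ) : EReal) - c := by
  simp_rw [sub_eq_add_neg]
  exact continuous_iff_continuousAt.2 fun _ =>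
    (EReal.continuousAt_add (.inl (EReal.coe_ne_top _)) (.inl (EReal.coe_ne_bot _))).comp
      ((continuous_coe_real_ereal.comp (continuous_const.inner continuous_id)).prodMk
        continuous_const).continuousAt

theorem lowerSemicontinuous_fconj (f : Euc d → EReal) : LowerSemicontinuous (fconj f) :=
  lowerSemicontinuous_iSup fun x => (continuous_coe_inner_sub x (f x)).lowerSemicontinuous

theorem upperSemicontinuous_coe_inner_sub_fconj (f : Euc d → EReal) (x : Euc d) :
    UpperSemicontinuous fun y => ((⟪x, y⟫ : ℝ) : EReal) - fconj f y := by
  simp_rw [sub_eq_add_neg]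
  refine UpperSemicontinuous.add' (continuous_coe_real_ereal.comp
    (continuous_const.inner continuous_id)).upperSemicontinuous ?_
    fun y => EReal.continuousAt_add (.inl (EReal.coe_ne_top _)) (.inl (EReal.coe_ne_bot _))
  exact continuous_neg.comp_lowerSemicontinuous_antitone (lowerSemicontinuous_fconj f)
    fun _ _ h => EReal.neg_le_neg_iff.2 h

end Conjugate

section RestrSup

variable {d : ℕ} {f : Euc d → EReal} {C : Set (Euc d)} {x y : Euc d}

theorem le_restrSup (hy : y ∈ C) : ((⟪x, y⟫ : ℝ) : EReal) - fconj f y ≤ restrSup f C x :=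
  le_iSup₂ (f := fun y (_ : y ∈ C) => ((⟪x, y⟫ : ℝ) : EReal) - fconj f y) y hy

theorem mem_argMaxOn_iff : y ∈ argMaxOn f C x ↔
    y ∈ C ∧ restrSup f C x ≤ ((⟪x, y⟫ : ℝ) : EReal) - fconj f y :=
  and_congr_right fun _ => iSup₂_le_iff.symm

theorem restrSup_eq_of_mem_argMaxOn (hy : y ∈ argMaxOn f C x) :
    restrSup f C x = ((⟪x, y⟫ : ℝ) : EReal) - fconj f y :=
  (mem_argMaxOn_iff.1 hy).2.antisymm (le_restrSup hy.1)

theorem argMaxOn_nonempty (hC : IsCompact C) (hCne : C.Nonempty) (x : Euc d) :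
    (argMaxOn f C x).Nonempty :=
  let ⟨y, hyC, hmax⟩ :=
    ((upperSemicontinuous_coe_inner_sub_fconj f x).upperSemicontinuousOn C).exists_isMaxOn hCne hC
  ⟨y, hyC, hmax⟩

theorem fconj_ne_top_of_mem_argMaxOn (hbot : ∀ y, fconj f y ≠ ⊥)
    (hdom : (C ∩ {y | fconj f y ≠ ⊤}).Nonempty) (hy : y ∈ argMaxOn f C x) :
    fconj f y ≠ ⊤ := by
  obtain ⟨y₁, hy₁C, hy₁⟩ := hdom
  intro htop
  have h := hy.2 y₁ hy₁C
  rw [htop, EReal.sub_top, le_bot_iff, ← EReal.coe_toReal hy₁ (hbot y₁), ← EReal.coe_sub]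
    at h
  exact EReal.coe_ne_bot _ h

theorem coe_toRealFun_restrSup (hC : IsCompact C) (hbot : ∀ y, fconj f y ≠ ⊥)
    (hdom : (C ∩ {y | fconj f y ≠ ⊤}).Nonempty) (x : Euc d) :
    ((toRealFun (restrSup f C) x : ℝ) : EReal) = restrSup f C x := by
  obtain ⟨y, hy⟩ := argMaxOn_nonempty hC (hdom.mono inter_subset_left) x
  have h : restrSup f C x = ((⟪x, y⟫ - (fconj f y).toReal : ℝ) : EReal) := by
    rw [restrSup_eq_of_mem_argMaxOn hy, EReal.coe_sub,
      EReal.coe_toReal (fconj_ne_top_of_mem_argMaxOn hbot hdom hy) (hbot y)]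
  rw [toRealFun, h, EReal.toReal_coe]

theorem restrSup_eq_coe_toRealFun (hC : IsCompact C) (hbot : ∀ y, fconj f y ≠ ⊥)
    (hdom : (C ∩ {y | fconj f y ≠ ⊤}).Nonempty) :
    restrSup f C = fun x => ((toRealFun (restrSup f C) x : ℝ) : EReal) :=
  funext fun x => (coe_toRealFun_restrSup hC hbot hdom x).symm

theorem fconj_eq_of_mem_argMaxOn (hC : IsCompact C) (hbot : ∀ y, fconj f y ≠ ⊥)
    (hdom : (C ∩ {y | fconj f y ≠ ⊤}).Nonempty) (hy : y ∈ argMaxOn f C x) :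
    fconj f y = ((⟪x, y⟫ - toRealFun (restrSup f C) x : ℝ) : EReal) := by
  have h := restrSup_eq_of_mem_argMaxOn hy
  rw [← coe_toRealFun_restrSup hC hbot hdom,
    ← EReal.coe_toReal (fconj_ne_top_of_mem_argMaxOn hbot hdom hy) (hbot y), ← EReal.coe_sub,
    EReal.coe_eq_coe_iff] at h
  rw [← EReal.coe_toReal (fconj_ne_top_of_mem_argMaxOn hbot hdom hy) (hbot y),
    EReal.coe_eq_coe_iff]
  linarith

theorem toRealFun_restrSup_sub_le_inner (hC : IsCompact C) (hbot : ∀ y, fconj f y ≠ ⊥)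
    (hdom : (C ∩ {y | fconj f y ≠ ⊤}).Nonempty) (hy : y ∈ argMaxOn f C x) (x' : Euc d) :
    toRealFun (restrSup f C) x - toRealFun (restrSup f C) x' ≤ ⟪x - x', y⟫ := by
  have h := le_restrSup (f := f) (x := x') hy.1
  rw [fconj_eq_of_mem_argMaxOn hC hbot hdom hy, ← EReal.coe_sub,
    ← coe_toRealFun_restrSup hC hbot hdom, EReal.coe_le_coe_iff] at h
  rw [inner_sub_left]
  linarith

theorem continuous_toRealFun_restrSup (hC : IsCompact C) (hbot : ∀ y, fconj f y ≠ ⊥)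
    (hdom : (C ∩ {y | fconj f y ≠ ⊤}).Nonempty) :
    Continuous (toRealFun (restrSup f C)) := by
  obtain ⟨R, hR⟩ := hC.isBounded.exists_norm_le
  refine (LipschitzWith.of_le_add_mul' R fun a b => ?_).continuous
  obtain ⟨y, hy⟩ := argMaxOn_nonempty hC (hdom.mono inter_subset_left) a
  have h₁ := toRealFun_restrSup_sub_le_inner hC hbot hdom hy b
  have h₂ := real_inner_le_norm (a - b) y
  have h₃ := mul_le_mul_of_nonneg_left (hR y hy.1) (norm_nonneg (a - b))
  rw [dist_eq_norm]
  linarith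

theorem argMaxOn_subset_subdiff (hC : IsCompact C) (hbot : ∀ y, fconj f y ≠ ⊥)
    (hdom : (C ∩ {y | fconj f y ≠ ⊤}).Nonempty) (x : Euc d) :
    argMaxOn f C x ⊆ subdiff (restrSup f C) x := by
  intro y hy
  rw [restrSup_eq_coe_toRealFun hC hbot hdom, mem_subdiff_coe_iff]
  intro z
  have h := toRealFun_restrSup_sub_le_inner hC hbot hdom hy (x + z)
  rw [sub_add_cancel_left, inner_neg_left] at h
  linarith

theorem mem_argMaxOn_of_mapClusterPt (hC : IsCompact C) (hbot : ∀ y, fconj f y ≠ ⊥)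
    (hdom : (C ∩ {y | fconj f y ≠ ⊤}).Nonempty)
    {ι : Type*} {l : Filter ι} {xs ys : ι → Euc d} {yb : Euc d}
    (hxs : Tendsto xs l (𝓝 x)) (hys : ∀ᶠ i in l, ys i ∈ argMaxOn f C (xs i))
    (hyb : MapClusterPt yb l ys) : yb ∈ argMaxOn f C x := by
  obtain ⟨U, hUl, hUyb⟩ := mapClusterPt_iff_ultrafilter.1 hyb
  have hxU := hxs.mono_left hUl
  have hysU : ∀ᶠ i in (U : Filter ι), ys i ∈ argMaxOn f C (xs i) := hUl hys
  have hybC : yb ∈ C := hC.isClosed.mem_of_tendsto hUyb (hysU.mono fun _ h => h.1)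
  have hlim : Tendsto (fun i => ⟪xs i, ys i⟫ - toRealFun (restrSup f C) (xs i)) U
      (𝓝 (⟪x, yb⟫ - toRealFun (restrSup f C) x)) :=
    (hxU.inner hUyb).sub ((continuous_toRealFun_restrSup hC hbot hdom).tendsto x |>.comp hxU)
  have hconj : fconj f yb ≤ ((⟪x, yb⟫ - toRealFun (restrSup f C) x : ℝ) : EReal) :=
    ((lowerSemicontinuous_fconj f).lowerSemicontinuousAt yb).le_of_tendsto hUyb
      ((continuous_coe_real_ereal.tendsto _ |>.comp hlim).congr'
        (hysU.mono fun i h => (fconj_eq_of_mem_argMaxOn hC hbot hdom h).symm))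
  refine mem_argMaxOn_iff.2 ⟨hybC, ?_⟩
  calc restrSup f C x
      = ((⟪x, yb⟫ : ℝ) : EReal) -
          ((⟪x, yb⟫ - toRealFun (restrSup f C) x : ℝ) : EReal) := by
        rw [← coe_toRealFun_restrSup hC hbot hdom, ← EReal.coe_sub, sub_sub_cancel]
    _ ≤ ((⟪x, yb⟫ : ℝ) : EReal) - fconj f yb := EReal.sub_le_sub le_rfl hconj

theorem isCompact_argMaxOn (hC : IsCompact C) (hbot : ∀ y, fconj f y ≠ ⊥)
    (hdom : (C ∩ {y | fconj f y ≠ ⊤}).Nonempty) (x : Euc d) :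
    IsCompact (argMaxOn f C x) :=
  hC.of_isClosed_subset (isClosed_iff_clusterPt.2 fun _ hy =>
    mem_argMaxOn_of_mapClusterPt hC hbot hdom tendsto_const_nhds
      (eventually_principal.2 fun _ h => h) (by simpa [MapClusterPt] using hy))
    fun _ h => h.1

end RestrSup

section Subgradients

variable {d : ℕ} {f : Euc d → EReal} {C : Set (Euc d)} {x w : Euc d}

theorem exists_mem_argMaxOn_inner_le (hC : IsCompact C) (hbot : ∀ y, fconj f y ≠ ⊥)
    (hdom : (C ∩ {y | fconj f y ≠ ⊤}).Nonempty) (hw : w ∈ subdiff (restrSup f C) x)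
    (z : Euc d) : ∃ y ∈ argMaxOn f C x, ⟪z, w⟫ ≤ ⟪z, y⟫ := by
  choose s hs using fun t : ℝ =>
    argMaxOn_nonempty (f := f) hC (hdom.mono inter_subset_left) (x + t • z)
  rw [restrSup_eq_coe_toRealFun hC hbot hdom, mem_subdiff_coe_iff] at hw
  have hle : ∀ t > 0, ⟪z, w⟫ ≤ ⟪z, s t⟫ := by
    intro t ht
    have h₁ := hw (t • z)
    have h₂ := toRealFun_restrSup_sub_le_inner hC hbot hdom (hs t) x
    rw [add_sub_cancel_left] at h₂
    rw [real_inner_smul_left] at h₁ h₂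
    exact le_of_mul_le_mul_left (by linarith) ht
  -- A cluster point of the maximisers at `x + t z` as `t → 0⁺` is a maximiser at `x`.
  obtain ⟨yb, -, hyb⟩ := hC.exists_mapClusterPt (f := 𝓝[>] (0 : ℝ)) (u := s)
    (tendsto_principal.2 (Eventually.of_forall fun t => (hs t).1))
  have hxt : Tendsto (fun t : ℝ => x + t • z) (𝓝[>] 0) (𝓝 x) :=
    tendsto_nhdsWithin_of_tendsto_nhds
      ((by fun_prop : Continuous fun t : ℝ => x + t • z).tendsto' 0 x (by simp))
  have hclosed : IsClosed {y : Euc d | ⟪z, w⟫ ≤ ⟪z, y⟫} :=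
    isClosed_le continuous_const (continuous_const.inner continuous_id)
  exact ⟨yb, mem_argMaxOn_of_mapClusterPt hC hbot hdom hxt (Eventually.of_forall hs) hyb,
    hclosed.mem_of_mapClusterPt hyb (eventually_nhdsWithin_of_forall hle)⟩

theorem subdiff_subset_convexHull_argMaxOn (hC : IsCompact C) (hbot : ∀ y, fconj f y ≠ ⊥)
    (hdom : (C ∩ {y | fconj f y ≠ ⊤}).Nonempty) (x : Euc d) :
    subdiff (restrSup f C) x ⊆ convexHull ℝ (argMaxOn f C x) := by
  intro w hw
  by_contra hw'
  obtain ⟨ℓ, u, hℓA, hℓw⟩ := geometric_hahn_banach_closed_point (convex_convexHull ℝ _)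
    (isCompact_argMaxOn hC hbot hdom x).convexHull.isClosed hw'
  obtain ⟨y, hy, hwy⟩ := exists_mem_argMaxOn_inner_le hC hbot hdom hw
    ((InnerProductSpace.toDual ℝ (Euc d)).symm ℓ)
  have hℓy := hℓA y (subset_convexHull ℝ _ hy)
  rw [InnerProductSpace.toDual_symm_apply, InnerProductSpace.toDual_symm_apply] at hwy
  linarith

theorem hasGradientAt_of_argMaxOn_eq_singleton (hC : IsCompact C) (hbot : ∀ y, fconj f y ≠ ⊥)
    (hdom : (C ∩ {y | fconj f y ≠ ⊤}).Nonempty) (h : argMaxOn f C x = {w}) :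
    HasGradientAt (toRealFun (restrSup f C)) w x := by
  choose s hs using argMaxOn_nonempty (f := f) hC (hdom.mono inter_subset_left)
  have hsw : Tendsto s (𝓝 x) (𝓝 w) :=
    hC.tendsto_nhds_of_unique_mapClusterPt (Eventually.of_forall fun u => (hs u).1)
      fun y _ hy => by
        simpa [h] using mem_argMaxOn_of_mapClusterPt hC hbot hdom tendsto_id
          (Eventually.of_forall hs) hy
  have hw : w ∈ argMaxOn f C x := h ▸ rfl
  rw [hasGradientAt_iff_isLittleO, Asymptotics.isLittleO_iff]
  intro c hc
  filter_upwards [(tendsto_iff_norm_sub_tendsto_zero.1 hsw).eventually (ge_mem_nhds hc)]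
    with u hu
  have h₁ := toRealFun_restrSup_sub_le_inner hC hbot hdom (hs u) x
  have h₂ := toRealFun_restrSup_sub_le_inner hC hbot hdom hw u
  have h₃ : ⟪u - x, s u - w⟫ ≤ ‖u - x‖ * c :=
    (real_inner_le_norm _ _).trans (mul_le_mul_of_nonneg_left hu (norm_nonneg _))
  rw [inner_sub_right] at h₃
  rw [← neg_sub u x, inner_neg_left] at h₂
  rw [Real.norm_eq_abs, abs_le]
  constructor <;> linarith [real_inner_comm w (u - x)]

end Subgradients

/-- Lemma 2 of the paper, second part. -/
theorem stmt3 {d : ℕ} (f : Euc d → EReal) (hf : ClosedConvexFun f)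
    (C : Set (Euc d)) (hC : IsCompact C)
    (hCdom : (C ∩ {y | fconj f y ≠ ⊤}).Nonempty) (x : Euc d) :
    subdiff (restrSup f C) x = convexHull ℝ (subdiff (restrSup f C) x ∩ C) ∧
    (DifferentiableAt ℝ (toRealFun (restrSup f C)) x ↔
      ∃ y, subdiff (restrSup f C) x ∩ C = {y}) ∧
    (DifferentiableAt ℝ (toRealFun (restrSup f C)) x →
      subdiff (restrSup f C) x = {gradient (toRealFun (restrSup f C)) x} ∧
      gradient (toRealFun (restrSup f C)) x ∈ C) := by
  have hbot := hf.fconj_ne_bot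
  have hA : argMaxOn f C x ⊆ subdiff (restrSup f C) x ∩ C :=
    subset_inter (argMaxOn_subset_subdiff hC hbot hCdom x) fun _ h => h.1
  have hAne := argMaxOn_nonempty (f := f) hC (hCdom.mono inter_subset_left) x
  have hconvex : Convex ℝ (subdiff (restrSup f C) x) := by
    rw [restrSup_eq_coe_toRealFun hC hbot hCdom]
    exact convex_subdiff_coe _ x
  have hgrad (hd : DifferentiableAt ℝ (toRealFun (restrSup f C)) x) :
      subdiff (restrSup f C) x = {gradient (toRealFun (restrSup f C)) x} := by
    refine (hAne.mono (hA.trans inter_subset_left)).subset_singleton_iff.1 fun w hw => ?_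
    rw [restrSup_eq_coe_toRealFun hC hbot hCdom] at hw
    exact eq_gradient_of_mem_subdiff_coe hd hw
  have hgradC (hd : DifferentiableAt ℝ (toRealFun (restrSup f C)) x) :
      gradient (toRealFun (restrSup f C)) x ∈ C := by
    obtain ⟨y, hy⟩ := hAne
    obtain ⟨hyg, hyC⟩ := hA hy
    rw [hgrad hd, mem_singleton_iff] at hyg
    exact hyg ▸ hyC
  refine ⟨((subdiff_subset_convexHull_argMaxOn hC hbot hCdom x).trans
      (convexHull_mono hA)).antisymm (convexHull_min inter_subset_left hconvex),
    ⟨fun hd => ⟨_, by rw [hgrad hd, singleton_inter_of_mem (hgradC hd)]⟩,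
      fun ⟨w, hw⟩ => ?_⟩, fun hd => ⟨hgrad hd, hgradC hd⟩⟩
  exact (hasGradientAt_of_argMaxOn_eq_singleton hC hbot hCdom
    (hAne.subset_singleton_iff.1 (hw ▸ hA))).differentiableAt

end
end
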